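/- Let ε ∈ (0, 1/4], let M be a positive integer with M·ε ≥ 1, and let u₀ ∈ (2ε, 1 − 2ε). Let û₀ be the empirical mean of M i.i.d. Bernoulli(u₀) random variables. Then the event {|û₀ − u₀| < ε} has positive probability and E[(û₀ + ε)^{−1} | |û₀ − u₀| < ε] ≤ −ε/(u₀·(u₀ + ε))·C(M, ⌈2εM⌉)·(2ε)^M + 1/u₀, where C(M, k) denotes the binomial coefficient. -/

import Mathlib

/-!
On `A = {|û₀ - u₀| < ε}` we have `û₀ + ε > u₀`, so `(û₀ + ε)⁻¹ ≤ 1 / u₀`. On the sub-event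
`B = {∑ yₖ = j}`, `j = ⌈M u₀⌉`, the empirical mean is `x = j / M ∈ [u₀, u₀ + ε)` and the integrand
is smaller by `c = 1 / u₀ - 1 / (x + ε)`, whence `E[(û₀ + ε)⁻¹ | A] ≤ 1 / u₀ - c P(B)` with
`P(B) ≥ C(M, j) u₀ʲ (1 - u₀)^(M - j)`. It remains to compare with `k = ⌈2εM⌉ ≤ j`, using
`2ε < min u₀ (1 - u₀)`: either `j + k ≤ M` and unimodality gives `C(M, k) ≤ C(M, j)`, or
`j + k = M + 1` and `j C(M, j) = k C(M, k)` does the job up to a factor `x / u₀`, which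
`c ≥ ε x / (u₀² (u₀ + ε))` absorbs.
-/

open MeasureTheory ProbabilityTheory
open scoped ENNReal

/-- The Bernoulli distribution with parameter `p`, as a measure on `ℝ`
(mass `p` at `1` and mass `1 - p` at `0`). -/
noncomputable def bernoulliReal (p : ℝ) : Measure ℝ :=
  ENNReal.ofReal p • Measure.dirac 1 + ENNReal.ofReal (1 - p) • Measure.dirac 0

open Finset

namespace Nat

theorem choose_le_choose_of_le_of_le_half {n a b : ℕ} (hab : a ≤ b) (hb : b ≤ n / 2) :
    n.choose a ≤ n.choose b := by
  induction b, hab using Nat.le_induction with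
  | base => exact le_rfl
  | succ b _ ih => exact (ih (by omega)).trans (choose_le_succ_of_lt_half_left (by omega))

theorem choose_le_choose_of_le_of_add_le {n a b : ℕ} (hab : a ≤ b) (h : a + b ≤ n) :
    n.choose a ≤ n.choose b := by
  rcases le_or_gt b (n / 2) with hb | hb
  · exact choose_le_choose_of_le_of_le_half hab hb
  · rw [← choose_symm (show b ≤ n by omega)]
    exact choose_le_choose_of_le_of_le_half (by omega) (by omega)

theorem choose_mul_eq_choose_mul_of_add_eq_succ {n a b : ℕ} (h : a + b = n + 1) :
    n.choose a * a = n.choose b * b := by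
  obtain _ | b := b
  · simp [choose_eq_zero_of_lt (show n < a by omega)]
  · rw [choose_succ_right_eq, ← choose_symm (show b ≤ n by omega), show n - b = a by omega]

theorem ceil_add_ceil_le_succ {α : Type*} [Field α] [LinearOrder α] [IsStrictOrderedRing α]
    [FloorSemiring α] {s t : α} {n : ℕ} (hs : 0 ≤ s) (ht : 0 ≤ t) (h : s + t ≤ n) :
    ⌈s⌉₊ + ⌈t⌉₊ ≤ n + 1 := by
  have hlt : ((⌈s⌉₊ + ⌈t⌉₊ : ℕ) : α) < (n + 2 : ℕ) := by
    push_cast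
    linarith [Nat.ceil_lt_add_one hs, Nat.ceil_lt_add_one ht]
  exact Nat.lt_succ_iff.1 (by exact_mod_cast hlt)

theorem ceil_mul_div_mem_Ico {α : Type*} [Semifield α] [LinearOrder α] [IsStrictOrderedRing α]
    [FloorSemiring α] {n : ℕ} (hn : 0 < n) {u : α} (hu : 0 ≤ u) :
    (⌈n * u⌉₊ / n : α) ∈ Set.Ico u (u + 1 / n) := by
  have hn' : (0 : α) < n := by exact_mod_cast hn
  constructor
  · rw [le_div_iff₀ hn', mul_comm]
    exact Nat.le_ceil _
  · rw [div_lt_iff₀ hn', add_mul, one_div_mul_cancel hn'.ne', mul_comm]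
    exact Nat.ceil_lt_add_one (by positivity)

end Nat

def binomialProb (M j : ℕ) (p : ℝ) : ℝ :=
  M.choose j * (p ^ j * (1 - p) ^ (M - j))

theorem binomialProb_pos {M j : ℕ} {p : ℝ} (hjM : j ≤ M) (hp0 : 0 < p) (hp1 : p < 1) :
    0 < binomialProb M j p := by
  unfold binomialProb
  exact mul_pos (by exact_mod_cast Nat.choose_pos hjM)
    (mul_pos (pow_pos hp0 _) (pow_pos (sub_pos.2 hp1) _))

theorem pow_le_pow_mul_pow_sub {R : Type*} [Semiring R] [PartialOrder R] [IsOrderedRing R]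
    {a p q : R} {m n : ℕ} (ha : 0 ≤ a) (hap : a ≤ p) (haq : a ≤ q)
    (hnm : n ≤ m) : a ^ m ≤ p ^ n * q ^ (m - n) := by
  have hp : 0 ≤ p := ha.trans hap
  rw [← pow_mul_pow_sub a hnm]
  gcongr

theorem mul_choose_mul_pow_le {M j k : ℕ} {a p : ℝ} (ha : 0 ≤ a) (hap : a ≤ p) (haq : a ≤ 1 - p)
    (hpj : M * p ≤ j) (hak : a * M ≤ k) (hkj : k ≤ j) (hjM : j ≤ M) (hjk : j + k ≤ M + 1) :
    M * p * (M.choose k * a ^ M) ≤ j * binomialProb M j p := by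
  have hp : 0 ≤ p := ha.trans hap
  rcases hjk.lt_or_eq with hjk | hjk
  · have hchoose : (M.choose k : ℝ) ≤ M.choose j := by
      exact_mod_cast Nat.choose_le_choose_of_le_of_add_le hkj (by omega)
    unfold binomialProb
    gcongr
    exact pow_le_pow_mul_pow_sub ha hap haq hjM
  · have hident : (M.choose j : ℝ) * j = M.choose k * k := by
      exact_mod_cast Nat.choose_mul_eq_choose_mul_of_add_eq_succ hjk
    have hpow : p * a ^ (M - 1) ≤ p ^ j * (1 - p) ^ (M - j) := by
      have h := pow_le_pow_mul_pow_sub ha hap haq (show j - 1 ≤ M - 1 by omega)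
      rw [show M - 1 - (j - 1) = M - j by omega] at h
      rw [← mul_pow_sub_one (by omega : j ≠ 0) p, mul_assoc]
      gcongr
    calc (M : ℝ) * p * (M.choose k * a ^ M)
        = M.choose k * (a * M) * (p * a ^ (M - 1)) := by
          rw [← mul_pow_sub_one (by omega : M ≠ 0) a]; ring
      _ ≤ M.choose k * k * (p ^ j * (1 - p) ^ (M - j)) := by gcongr
      _ = j * (M.choose j * (p ^ j * (1 - p) ^ (M - j))) := by rw [← hident]; ring

theorem mul_choose_ceil_mul_pow_le {M : ℕ} {a p : ℝ} (ha : 0 ≤ a) (hap : a ≤ p)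
    (haq : a ≤ 1 - p) :
    M * p * (M.choose ⌈a * M⌉₊ * a ^ M) ≤ ⌈M * p⌉₊ * binomialProb M ⌈M * p⌉₊ p := by
  have hM : (0 : ℝ) ≤ M := M.cast_nonneg
  exact mul_choose_mul_pow_le ha hap haq (Nat.le_ceil _) (Nat.le_ceil _)
    (Nat.ceil_le_ceil (by nlinarith)) (Nat.ceil_le.2 (by nlinarith))
    (Nat.ceil_add_ceil_le_succ (mul_nonneg hM (ha.trans hap)) (by positivity) (by nlinarith))

theorem div_mul_div_le_inv_sub_inv {ε u x : ℝ} (hε : 0 < ε) (hu : 2 * ε < u) (hux : u ≤ x)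
    (hxu : x < u + ε) : ε / (u * (u + ε)) * (x / u) ≤ 1 / u - 1 / (x + ε) := by
  have hu0 : 0 < u := by linarith
  rw [div_mul_div_comm, div_sub_div _ _ hu0.ne' (by linarith), div_le_div_iff₀ (by positivity)
    (by nlinarith)]
  nlinarith [mul_nonneg (sub_nonneg.2 hux) (by nlinarith : 0 ≤ u ^ 2 - ε * u - ε * (x - u) - ε ^ 2)]


theorem div_mul_choose_mul_pow_le_sub_mul_binomialProb {M : ℕ} {ε u : ℝ} (hε : 0 < ε)
    (hu₁ : 2 * ε < u) (hu₂ : u < 1 - 2 * ε) (hMε : 1 ≤ M * ε) :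
    ε / (u * (u + ε)) * M.choose ⌈2 * ε * M⌉₊ * (2 * ε) ^ M ≤
      (1 / u - 1 / (⌈M * u⌉₊ / M + ε)) * binomialProb M ⌈M * u⌉₊ u := by
  have hM : (0 : ℝ) < M := pos_of_mul_pos_left (one_pos.trans_le hMε) hε.le
  have hu : 0 < u := by linarith
  set j := ⌈M * u⌉₊
  obtain ⟨hux, hxu⟩ := Nat.ceil_mul_div_mem_Ico (Nat.cast_pos.1 hM) hu.le
  have hcoef := div_mul_div_le_inv_sub_inv hε hu₁ hux
    (hxu.trans_le (by gcongr; exact (div_le_iff₀ hM).2 (by linarith)))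
  have hcomb := mul_choose_ceil_mul_pow_le (M := M) (by positivity : 0 ≤ 2 * ε) hu₁.le
    (by linarith)
  have hP : 0 ≤ binomialProb M j u :=
    (binomialProb_pos (Nat.ceil_le.2 (by nlinarith)) hu (by linarith)).le
  calc ε / (u * (u + ε)) * M.choose ⌈2 * ε * M⌉₊ * (2 * ε) ^ M
      = ε / (u * (u + ε)) / (M * u) * (M * u * (M.choose ⌈2 * ε * M⌉₊ * (2 * ε) ^ M)) := by
        field_simp
    _ ≤ ε / (u * (u + ε)) / (M * u) * (j * binomialProb M j u) := by gcongr
    _ = ε / (u * (u + ε)) * (j / M / u) * binomialProb M j u := by ring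
    _ ≤ (1 / u - 1 / (j / M + ε)) * binomialProb M j u := by gcongr

section Pattern

variable {Ω : Type*} {M : ℕ} {y : Fin M → Ω → ℝ}

def patternEvent (y : Fin M → Ω → ℝ) (T : Finset (Fin M)) : Set Ω :=
  ⋂ k, y k ⁻¹' {if k ∈ T then 1 else 0}

theorem mem_patternEvent {T : Finset (Fin M)} {ω : Ω} :
    ω ∈ patternEvent y T ↔ ∀ k, y k ω = if k ∈ T then 1 else 0 := by
  simp [patternEvent]

theorem pairwiseDisjoint_patternEvent (s : Set (Finset (Fin M))) :
    s.PairwiseDisjoint (patternEvent y) := by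
  intro T _ T' _ hTT'
  refine Set.disjoint_left.2 fun ω hω hω' ↦ hTT' (Finset.ext fun k ↦ ?_)
  have h := (mem_patternEvent.1 hω k).symm.trans (mem_patternEvent.1 hω' k)
  split_ifs at h <;> simp_all

theorem sum_eq_card_of_mem_patternEvent {T : Finset (Fin M)} {ω : Ω}
    (hω : ω ∈ patternEvent y T) : ∑ k, y k ω = #T := by
  simp [Finset.sum_congr rfl fun k _ ↦ mem_patternEvent.1 hω k]

variable [MeasurableSpace Ω] {μ : Measure Ω} {p : ℝ}

theorem measurableSet_patternEvent (hmeas : ∀ k, Measurable (y k)) (T : Finset (Fin M)) :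
    MeasurableSet (patternEvent y T) :=
  .iInter fun k ↦ hmeas k (measurableSet_singleton _)

theorem measure_patternEvent (hmeas : ∀ k, Measurable (y k)) (hindep : iIndepFun y μ)
    (hdist : ∀ k, μ.map (y k) = bernoulliReal p) (T : Finset (Fin M)) :
    μ (patternEvent y T) = ENNReal.ofReal p ^ #T * ENNReal.ofReal (1 - p) ^ (M - #T) := by
  have hk : ∀ k, μ (y k ⁻¹' {if k ∈ T then 1 else 0}) =
      if k ∈ T then ENNReal.ofReal p else ENNReal.ofReal (1 - p) := by
    intro k
    rw [← Measure.map_apply (hmeas k) (measurableSet_singleton _), hdist k]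
    split_ifs <;> simp [bernoulliReal]
  have h := hindep.measure_inter_preimage_eq_mul univ
    (sets := fun k ↦ {if k ∈ T then 1 else 0}) fun _ _ ↦ measurableSet_singleton _
  simp only [Finset.mem_univ, Set.iInter_true] at h
  rw [patternEvent, h, Finset.prod_congr rfl fun k _ ↦ hk k, Finset.prod_ite]
  simp [Finset.filter_not, Finset.card_sdiff]

theorem choose_mul_pow_le_measure_sum_eq (hmeas : ∀ k, Measurable (y k))
    (hindep : iIndepFun y μ) (hdist : ∀ k, μ.map (y k) = bernoulliReal p) (j : ℕ) :
    M.choose j * (ENNReal.ofReal p ^ j * ENNReal.ofReal (1 - p) ^ (M - j)) ≤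
      μ {ω | ∑ k, y k ω = j} := by
  calc _ = ∑ T ∈ powersetCard j univ, μ (patternEvent y T) := by
        rw [Finset.sum_congr rfl fun T hT ↦ by
          rw [measure_patternEvent hmeas hindep hdist, (mem_powersetCard.1 hT).2]]
        simp
    _ = μ (⋃ T ∈ powersetCard j univ, patternEvent y T) :=
        (measure_biUnion_finset (pairwiseDisjoint_patternEvent _)
          fun T _ ↦ measurableSet_patternEvent hmeas T).symm
    _ ≤ μ {ω | ∑ k, y k ω = j} := by
        refine measure_mono (Set.iUnion₂_subset fun T hT ω hω ↦ ?_)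
        rw [Set.mem_ofPred_eq, sum_eq_card_of_mem_patternEvent hω, (mem_powersetCard.1 hT).2]

theorem binomialProb_le_measureReal_sum_eq [IsFiniteMeasure μ] (hp0 : 0 ≤ p) (hp1 : p ≤ 1)
    (hmeas : ∀ k, Measurable (y k)) (hindep : iIndepFun y μ)
    (hdist : ∀ k, μ.map (y k) = bernoulliReal p) (j : ℕ) :
    binomialProb M j p ≤ μ.real {ω | ∑ k, y k ω = j} := by
  have h := choose_mul_pow_le_measure_sum_eq hmeas hindep hdist j
  rw [← ENNReal.ofReal_pow hp0, ← ENNReal.ofReal_pow (sub_nonneg.2 hp1),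
    ← ENNReal.ofReal_mul (by positivity), ← ENNReal.ofReal_natCast,
    ← ENNReal.ofReal_mul (by positivity)] at h
  exact (ENNReal.ofReal_le_iff_le_toReal (measure_ne_top _ _)).1 h

end Pattern

section CondIntegral

variable {Ω : Type*} [MeasurableSpace Ω] {μ : Measure Ω} [IsProbabilityMeasure μ]

theorem measureReal_le_cond_measureReal {A B : Set Ω} (hA : MeasurableSet A) (hBA : B ⊆ A) :
    μ.real B ≤ (μ[|A]).real B := by
  refine ENNReal.toReal_mono (measure_ne_top _ _) ?_
  rw [cond_apply hA, Set.inter_eq_right.2 hBA]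
  exact le_mul_of_one_le_left' (ENNReal.one_le_inv.2 prob_le_one)

theorem integral_cond_le_sub_mul_measureReal {A B : Set Ω} {f : Ω → ℝ} {b c : ℝ}
    (hA : MeasurableSet A) (hB : MeasurableSet B) (hBA : B ⊆ A) (hμA : μ A ≠ 0) (hc : 0 ≤ c)
    (hf0 : ∀ ω ∈ A, 0 ≤ f ω) (hfA : ∀ ω ∈ A, f ω ≤ b) (hfB : ∀ ω ∈ B, f ω ≤ b - c) :
    ∫ ω, f ω ∂μ[|A] ≤ b - c * μ.real B := by
  have := cond_isProbabilityMeasure (μ := μ) hμA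
  have hg : ∀ ω ∈ A, f ω ≤ b - c * B.indicator 1 ω := by
    intro ω hω
    by_cases hωB : ω ∈ B
    · simpa [hωB] using hfB ω hωB
    · simpa [hωB] using hfA ω hω
  have hint : Integrable (fun ω ↦ c * B.indicator 1 ω) μ[|A] :=
    ((integrable_const (1 : ℝ)).indicator hB).const_mul c
  calc ∫ ω, f ω ∂μ[|A] ≤ ∫ ω, (b - c * B.indicator 1 ω) ∂μ[|A] := by
        refine integral_mono_of_nonneg ?_ ?_ ?_
        · filter_upwards [ae_cond_mem hA] with ω hω using hf0 ω hω
        · exact (integrable_const b).sub hint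
        · filter_upwards [ae_cond_mem hA] with ω hω using hg ω hω
    _ = b - c * (μ[|A]).real B := by
        rw [integral_sub (integrable_const b) hint, integral_const, integral_const_mul,
          integral_indicator_one hB]
        simp
    _ ≤ b - c * μ.real B := by gcongr; exact measureReal_le_cond_measureReal hA hBA

theorem integral_cond_inv_add_le {A B : Set Ω} {g : Ω → ℝ} {u ε x : ℝ} (hA : MeasurableSet A)
    (hB : MeasurableSet B) (hBA : B ⊆ A) (hμA : μ A ≠ 0) (hu : 0 < u) (hux : u ≤ x + ε)
    (hgA : ∀ ω ∈ A, u < g ω + ε) (hgB : ∀ ω ∈ B, g ω = x) :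
    ∫ ω, (g ω + ε)⁻¹ ∂μ[|A] ≤ 1 / u - (1 / u - 1 / (x + ε)) * μ.real B := by
  refine integral_cond_le_sub_mul_measureReal hA hB hBA hμA
    (sub_nonneg.2 (one_div_le_one_div_of_le hu hux)) (fun ω hω ↦ (inv_pos.2 (hu.trans (hgA ω hω))).le)
    (fun ω hω ↦ ?_) (fun ω hω ↦ by simp [hgB ω hω])
  rw [one_div]
  exact inv_anti₀ hu (hgA ω hω).le

end CondIntegral

theorem conditional_inv_upper_bound_general
    {Ω : Type*} [MeasurableSpace Ω] {μ : Measure Ω} [IsProbabilityMeasure μ]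
    (ε : ℝ) (hε : 0 < ε)
    (M : ℕ) (hM : 0 < M) (hMε : 1 ≤ (M : ℝ) * ε)
    (u₀ : ℝ) (hu₀ : u₀ ∈ Set.Ioo (2 * ε) (1 - 2 * ε))
    (y : Fin M → Ω → ℝ) (hmeas : ∀ k, Measurable (y k))
    (hindep : iIndepFun y μ)
    (hdist : ∀ k, Measure.map (y k) μ = bernoulliReal u₀)
    (uhat : Ω → ℝ) (huhat : ∀ ω, uhat ω = (∑ k, y k ω) / M)
    (A : Set Ω) (hA : A = {ω | |uhat ω - u₀| < ε}) :
    0 < μ A ∧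
      ∫ ω, (uhat ω + ε)⁻¹ ∂(μ[|A]) ≤
        -ε / (u₀ * (u₀ + ε)) * (M.choose ⌈2 * ε * M⌉₊ : ℝ) * (2 * ε) ^ M + 1 / u₀ := by
  obtain ⟨hu₁, hu₂⟩ := hu₀
  have hu₀ : 0 < u₀ := by linarith
  set j := ⌈M * u₀⌉₊
  set B := {ω | ∑ k, y k ω = j}
  have huhat_B : ∀ ω ∈ B, uhat ω = j / M := fun ω hω ↦ by rw [huhat, hω]
  obtain ⟨hux, hxu⟩ := Nat.ceil_mul_div_mem_Ico hM hu₀.le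
  have hBA : B ⊆ A := fun ω hω ↦ by
    rw [hA, Set.mem_ofPred_eq, huhat_B ω hω, abs_lt]
    have : (1 : ℝ) / M ≤ ε := (div_le_iff₀ (by exact_mod_cast hM)).2 (by linarith)
    constructor <;> linarith
  have hB : MeasurableSet B :=
    measurableSet_eq_fun (Finset.measurable_sum _ fun k _ ↦ hmeas k) measurable_const
  have hA' : MeasurableSet A := by
    rw [hA, funext huhat]
    exact measurableSet_lt (by fun_prop) measurable_const
  have hPB := binomialProb_le_measureReal_sum_eq hu₀.le (by linarith) hmeas hindep hdist j
  have hμB : μ.real B ≠ 0 :=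
    ((binomialProb_pos (Nat.ceil_le.2 (by nlinarith)) hu₀ (by linarith)).trans_le hPB).ne'
  have hμA : μ A ≠ 0 := fun h ↦ hμB (by simp [Measure.real, measure_mono_null hBA h])
  refine ⟨pos_iff_ne_zero.2 hμA, ?_⟩
  have hbound_A : ∀ ω ∈ A, u₀ < uhat ω + ε := fun ω hω ↦ by
    rw [hA, Set.mem_ofPred_eq] at hω
    linarith [(abs_lt.1 hω).1]
  calc ∫ ω, (uhat ω + ε)⁻¹ ∂μ[|A] ≤ 1 / u₀ - (1 / u₀ - 1 / (j / M + ε)) * μ.real B :=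
        integral_cond_inv_add_le hA' hB hBA hμA hu₀ (by linarith) hbound_A huhat_B
    _ ≤ 1 / u₀ - (1 / u₀ - 1 / (j / M + ε)) * binomialProb M j u₀ := by
        gcongr
        exact sub_nonneg.2 (one_div_le_one_div_of_le hu₀ (by linarith))
    _ ≤ _ := by
        rw [neg_div]
        linarith [div_mul_choose_mul_pow_le_sub_mul_binomialProb hε hu₁ hu₂ hMε]

/-- **Conditional-expectation upper bound** from the proof of Theorem 2 (case
`|û₀ - u₀| < ε`): with `û₀` the empirical mean of `M` i.i.d. Bernoulli(`u₀`)
variables and `A = {|û₀ - u₀| < ε}`, the event `A` has positive probability and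
`E[(û₀ + ε)⁻¹ | A] ≤ -ε / (u₀ (u₀ + ε)) · C(M, ⌈2εM⌉) · (2ε)^M + 1 / u₀`. -/
theorem conditional_inv_upper_bound
    {Ω : Type*} [MeasurableSpace Ω] {μ : Measure Ω} [IsProbabilityMeasure μ]
    (ε : ℝ) (hε : 0 < ε) (hε4 : ε ≤ 1 / 4)
    (M : ℕ) (hM : 0 < M) (hMε : 1 ≤ (M : ℝ) * ε)
    (u₀ : ℝ) (hu₀ : u₀ ∈ Set.Ioo (2 * ε) (1 - 2 * ε))
    (y : Fin M → Ω → ℝ) (hmeas : ∀ k, Measurable (y k))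
    (hindep : iIndepFun y μ)
    (hdist : ∀ k, Measure.map (y k) μ = bernoulliReal u₀)
    (uhat : Ω → ℝ) (huhat : ∀ ω, uhat ω = (∑ k, y k ω) / M)
    (A : Set Ω) (hA : A = {ω | |uhat ω - u₀| < ε}) :
    0 < μ A ∧
      ∫ ω, (uhat ω + ε)⁻¹ ∂(μ[|A]) ≤
        -ε / (u₀ * (u₀ + ε)) * (M.choose ⌈2 * ε * M⌉₊ : ℝ) * (2 * ε) ^ M + 1 / u₀ :=
  conditional_inv_upper_bound_general ε hε M hM hMε u₀ hu₀ y hmeas hindep hdist uhat huhat A hA
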